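/- Let h : ℂ → ℂ be defined by h(z) = (4/27)·(z²−z+1)³/(z²·(1−z)²), and let g : ℂ → ℂ be complex-differentiable at a point z with g(z) ≠ 0 and g(z) ≠ 1. If the derivative of the composition h ∘ g vanishes at z, then either the derivative of g vanishes at z, or h(g(z)) ∈ {0, 1}. (Hence the finite critical values of the composition h ∘ g are contained in {0, 1} together with the h-images of the critical values of g; this is why β = h(β₀) is again a Belyi function when β₀ is.) -/

import Mathlib

/-! Both `h'` and `h - 1` factor through the same cubic: away from the poles `0` and `1`,
`h' w = 4 (w² - w + 1)² (2w - 1)(w + 1)(2 - w) / (27 w³ (1 - w)³)` and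
`h w - 1 = ((2w - 1)(w + 1)(2 - w))² / (27 w² (1 - w)²)`.
So a critical point of `h` is either a zero of `h` or a point where `h = 1`, and the chain rule
`(h ∘ g)' z = h' (g z) · g' z` transfers this to `h ∘ g`. -/

noncomputable def h : ℂ → ℂ :=
  fun z => (4 / 27) * (z ^ 2 - z + 1) ^ 3 / (z ^ 2 * (1 - z) ^ 2)

section

variable {w : ℂ}

lemma hasDerivAt_h (hw0 : w ≠ 0) (hw1 : w ≠ 1) :
    HasDerivAt h
      (4 * (w ^ 2 - w + 1) ^ 2 * ((2 * w - 1) * (w + 1) * (2 - w)) / (27 * w ^ 3 * (1 - w) ^ 3))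
      w := by
  have hw1' : 1 - w ≠ 0 := sub_ne_zero.2 hw1.symm
  have hnum : HasDerivAt (fun z : ℂ => 4 / 27 * (z ^ 2 - z + 1) ^ 3)
      (4 / 27 * (3 * (w ^ 2 - w + 1) ^ 2 * (2 * w - 1))) w := by
    have hq : HasDerivAt (fun z : ℂ => z ^ 2 - z + 1) (2 * w - 1) w := by
      simpa using ((hasDerivAt_pow 2 w).sub (hasDerivAt_id w)).add_const 1
    simpa using (hq.pow 3).const_mul (4 / 27 : ℂ)
  have hden : HasDerivAt (fun z : ℂ => z ^ 2 * (1 - z) ^ 2)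
      (2 * w * (1 - w) ^ 2 + w ^ 2 * (2 * (1 - w) * -1)) w := by
    have hl : HasDerivAt (fun z : ℂ => 1 - z) (-1) w := by
      simpa using (hasDerivAt_id w).const_sub 1
    exact ((hasDerivAt_pow 2 w).mul (hl.pow 2)).congr_deriv (by simp)
  refine (hnum.div hden (by positivity)).congr_deriv ?_
  field_simp
  ring

lemma h_sub_one (hw0 : w ≠ 0) (hw1 : w ≠ 1) :
    h w - 1 = ((2 * w - 1) * (w + 1) * (2 - w)) ^ 2 / (27 * w ^ 2 * (1 - w) ^ 2) := by
  have hw1' : 1 - w ≠ 0 := sub_ne_zero.2 hw1.symm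
  simp only [h]
  field_simp
  ring

lemma h_eq_zero_or_one_of_deriv_eq_zero (hw0 : w ≠ 0) (hw1 : w ≠ 1) (hcrit : deriv h w = 0) :
    h w = 0 ∨ h w = 1 := by
  have hw1' : 1 - w ≠ 0 := sub_ne_zero.2 hw1.symm
  rw [(hasDerivAt_h hw0 hw1).deriv] at hcrit
  have hfac : (w ^ 2 - w + 1) * ((2 * w - 1) * (w + 1) * (2 - w)) = 0 := by
    simpa [hw0, hw1'] using hcrit
  rcases mul_eq_zero.1 hfac with hq | hc
  · left
    simp [h, hq]
  · right
    rw [← sub_eq_zero, h_sub_one hw0 hw1, hc]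
    simp

end

theorem stmt_10 :
    ∀ (g : ℂ → ℂ) (z : ℂ), DifferentiableAt ℂ g z → g z ≠ 0 → g z ≠ 1 →
      deriv (h ∘ g) z = 0 → deriv g z = 0 ∨ h (g z) = 0 ∨ h (g z) = 1 := by
  intro g z hg hg0 hg1 hcomp
  rw [deriv_comp z (hasDerivAt_h hg0 hg1).differentiableAt hg, mul_eq_zero] at hcomp
  rcases hcomp with hcrit | hg'
  · exact Or.inr (h_eq_zero_or_one_of_deriv_eq_zero hg0 hg1 hcrit)
  · exact Or.inl hg'
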